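/- Let L ≥ 1 be a natural number, n a positive real number, and a_1,…,a_L, b_1,…,b_L positive real numbers such that a_1 = 1 and a_i · ∏_{j=i}^{L} b_j = n for every i ∈ {1,…,L}. Then ∑_{i=1}^{L} a_i · b_i² ≥ L · n · (n / ∏_{i=2}^{L} b_i^{i-1})^{1/L}. -/
import Mathlib


open Finset

theorem hierarchical_approx_complexity
    (L : ℕ) (hL : 1 ≤ L) (n : ℝ) (hn : 0 < n)
    (a b : ℕ → ℝ)
    (ha : ∀ i ∈ Icc 1 L, 0 < a i)
    (hb : ∀ i ∈ Icc 1 L, 0 < b i)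
    (ha1 : a 1 = 1)
    (hconstr : ∀ i ∈ Icc 1 L, a i * ∏ j ∈ Icc i L, b j = n) :
    ∑ i ∈ Icc 1 L, a i * (b i) ^ 2 ≥
      L * n * (n / ∏ i ∈ Icc 2 L, (b i) ^ (i - 1)) ^ ((1 : ℝ) / L) := by
  set P : ℝ := ∏ i ∈ Icc 2 L, (b i) ^ (i - 1) with hP
  have hPpos : 0 < P := by
    refine Finset.prod_pos fun i hi => ?_
    refine pow_pos (hb i ?_) _
    rcases Finset.mem_Icc.mp hi with ⟨h1, h2⟩
    exact Finset.mem_Icc.mpr ⟨by omega, h2⟩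
  have hbn : ∏ j ∈ Icc 1 L, b j = n := by
    have := hconstr 1 (Finset.mem_Icc.mpr ⟨le_refl 1, hL⟩)
    rwa [ha1, one_mul] at this
  have hai : ∀ i ∈ Icc 1 L, a i = n / ∏ j ∈ Icc i L, b j := by
    intro i hi
    have hc := hconstr i hi
    have hbpos : 0 < ∏ j ∈ Icc i L, b j := by
      refine Finset.prod_pos fun j hj => hb j ?_
      rcases Finset.mem_Icc.mp hj with ⟨h1, h2⟩
      exact Finset.mem_Icc.mpr ⟨le_trans (Finset.mem_Icc.mp hi).1 h1, h2⟩
    field_simp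
    linarith [hc]
  -- double product identity
  have hdouble : ∏ i ∈ Icc 1 L, ∏ j ∈ Icc i L, b j = ∏ j ∈ Icc 1 L, (b j) ^ j := by
    rw [Finset.prod_comm' (t' := Icc 1 L) (s' := fun j => Icc 1 j)
      (by intro i j; simp only [Finset.mem_Icc]; omega)]
    refine Finset.prod_congr rfl fun j _ => ?_
    rw [Finset.prod_const, Nat.card_Icc]
    norm_num
  have hbjj : ∏ j ∈ Icc 1 L, (b j) ^ j = n * P := by
    have h1 : ∏ j ∈ Icc 1 L, (b j) ^ j = ∏ j ∈ Icc 1 L, (b j * (b j) ^ (j - 1)) := by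
      refine Finset.prod_congr rfl fun j hj => ?_
      rcases Finset.mem_Icc.mp hj with ⟨hj1, _⟩
      rw [← pow_succ']
      congr 1
      omega
    rw [h1, Finset.prod_mul_distrib, hbn]
    congr 1
    rw [hP]
    symm
    refine Finset.prod_subset (fun x hx => ?_) (fun x hx hx2 => ?_)
    · rcases Finset.mem_Icc.mp hx with ⟨h1, h2⟩
      exact Finset.mem_Icc.mpr ⟨by omega, h2⟩
    · have : x = 1 := by
        rcases Finset.mem_Icc.mp hx with ⟨h1, h2⟩
        simp only [Finset.mem_Icc] at hx2
        omega
      simp [this]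
  -- product of the summands
  have hzpos : ∀ i ∈ Icc 1 L, 0 < a i * (b i) ^ 2 := fun i hi =>
    mul_pos (ha i hi) (pow_pos (hb i hi) 2)
  have hQ : ∏ i ∈ Icc 1 L, (a i * (b i) ^ 2) = n ^ L * (n / P) := by
    rw [Finset.prod_mul_distrib, Finset.prod_pow, hbn,
      Finset.prod_congr rfl hai, Finset.prod_div_distrib, Finset.prod_const,
      Nat.card_Icc, hdouble, hbjj]
    have : (L + 1 - 1) = L := by omega
    rw [this]
    field_simp
  -- AM-GM
  have hcard : (Icc 1 L).card = L := by rw [Nat.card_Icc]; omega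
  have hLR : (0:ℝ) < L := by exact_mod_cast hL
  have hamgm := Real.geom_mean_le_arith_mean_weighted (Icc 1 L)
    (fun _ => 1 / (L:ℝ)) (fun i => a i * (b i) ^ 2)
    (fun i _ => by positivity)
    (by rw [Finset.sum_const, hcard, nsmul_eq_mul]; field_simp)
    (fun i hi => (hzpos i hi).le)
  rw [Real.finset_prod_rpow _ _ (fun i hi => (hzpos i hi).le), hQ] at hamgm
  have hkey : (n ^ L * (n / P)) ^ ((1:ℝ) / L) = n * (n / P) ^ ((1:ℝ) / L) := by
    rw [Real.mul_rpow (by positivity) (by positivity)]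
    congr 1
    rw [← Real.rpow_natCast n L, ← Real.rpow_mul hn.le]
    rw [mul_one_div, div_self (ne_of_gt hLR), Real.rpow_one]
  rw [hkey] at hamgm
  have hsum : ∑ i ∈ Icc 1 L, (1 / (L:ℝ)) * (a i * (b i) ^ 2)
      = (1 / (L:ℝ)) * ∑ i ∈ Icc 1 L, a i * (b i) ^ 2 := by
    rw [Finset.mul_sum]
  rw [hsum] at hamgm
  rw [ge_iff_le, mul_assoc]
  calc (L:ℝ) * (n * (n / P) ^ ((1:ℝ)/L))
      ≤ (L:ℝ) * ((1 / (L:ℝ)) * ∑ i ∈ Icc 1 L, a i * (b i) ^ 2) := by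
        exact mul_le_mul_of_nonneg_left hamgm hLR.le
    _ = ∑ i ∈ Icc 1 L, a i * (b i) ^ 2 := by field_simp
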